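/- The monotone rearrangement operator is continuous as a map from L^p(Ω, m) to L^p([0,r], m_{K,N}): if u_n → u in L^p then u_n* → u* in L^p. -/

import Mathlib

open MeasureTheory Filter Topology Set ENNReal

noncomputable section

/-- Slope (local Lipschitz constant) of a real-valued function on a metric space. -/
def mslope {X : Type*} [PseudoMetricSpace X] (f : X → ℝ) (x : X) : ℝ :=
  Filter.limsup (fun y => |f x - f y| / dist x y) (𝓝[≠] x)

/-- A metric space is geodesic if every pair of points is joined by a
constant-speed geodesic defined on `[0,1]`. -/
def IsGeodesicSpace (X : Type*) [PseudoMetricSpace X] : Prop :=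
  ∀ x y : X, ∃ γ : ℝ → X, γ 0 = x ∧ γ 1 = y ∧
    ∀ s ∈ Set.Icc (0:ℝ) 1, ∀ t ∈ Set.Icc (0:ℝ) 1, dist (γ s) (γ t) = |s - t| * dist x y

/-- Relative total variation of `f` on `A`: relaxation of `∫_A` slope with
respect to `L¹(A)` convergence of Lipschitz approximations. -/
def relTV {X : Type*} [PseudoMetricSpace X] [MeasurableSpace X] (m : Measure X)
    (f : X → ℝ) (A : Set X) : ℝ≥0∞ :=
  sInf { p | ∃ u : ℕ → X → ℝ, (∀ n, ∃ L, LipschitzWith L (u n)) ∧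
    Tendsto (fun n => ∫⁻ x in A, ENNReal.ofReal |u n x - f x| ∂m) atTop (𝓝 0) ∧
    p = liminf (fun n => ∫⁻ x in A, ENNReal.ofReal (mslope (u n) x) ∂m) atTop }

/-- Relative perimeter of a set `E` in `A`. -/
def relPer {X : Type*} [PseudoMetricSpace X] [MeasurableSpace X] (m : Measure X)
    (E A : Set X) : ℝ≥0∞ :=
  relTV m (Set.indicator E (fun _ => 1)) A

/-- Cheeger `p`-energy (without the `1/p` factor): relaxation of `∫ (slope)^p`. -/
def cheegerE {X : Type*} [PseudoMetricSpace X] [MeasurableSpace X] (m : Measure X) (p : ℝ)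
    (f : X → ℝ) : ℝ≥0∞ :=
  sInf { e | ∃ u : ℕ → X → ℝ, (∀ n, ∃ L, LipschitzWith L (u n)) ∧
    Tendsto (fun n => ∫⁻ x, ENNReal.ofReal |u n x - f x| ^ p ∂m) atTop (𝓝 0) ∧
    e = liminf (fun n => ∫⁻ x, ENNReal.ofReal (mslope (u n) x) ^ p ∂m) atTop }

/-- Isoperimetric profile of a metric measure space. -/
def isoProfile {X : Type*} [PseudoMetricSpace X] [MeasurableSpace X] (m : Measure X)
    (v : ℝ) : ℝ :=
  sInf { p | ∃ E : Set X, MeasurableSet E ∧ (m E).toReal = v ∧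
    p = (relPer m E Set.univ).toReal }

/-- Length `π √((N-1)/K)` of the one-dimensional model space `I_{K,N}`. -/
def modelLength (K N : ℝ) : ℝ := Real.pi * Real.sqrt ((N - 1) / K)

/-- Density `sin(t √(K/(N-1)))^(N-1)` of the model measure. -/
def modelDensity (K N t : ℝ) : ℝ := Real.sin (t * Real.sqrt (K / (N - 1))) ^ (N - 1)

/-- Normalizing constant `c_{K,N}`. -/
def modelCoef (K N : ℝ) : ℝ := ∫ t in Set.Ioo 0 (modelLength K N), modelDensity K N t

/-- The normalized model measure `m_{K,N}` on `I_{K,N} ⊆ ℝ`. -/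
def modelMeasure (K N : ℝ) : Measure ℝ :=
  (volume.restrict (Set.Ioo 0 (modelLength K N))).withDensity
    (fun t => ENNReal.ofReal (modelDensity K N t / modelCoef K N))

/-- Distribution function `μ(t) = m({u > t})`. -/
def distribF {X : Type*} [MeasurableSpace X] (m : Measure X) (u : X → ℝ) (t : ℝ) : ℝ :=
  (m {x | u x > t}).toReal

/-- Generalized inverse `u^#` of the distribution function. -/
def genInv {X : Type*} [MeasurableSpace X] (m : Measure X) (u : X → ℝ) (s : ℝ) : ℝ :=
  if s = 0 then essSup u m else sInf {t | distribF m u t < s}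

/-- Monotone (decreasing) rearrangement of `u` onto the model interval. -/
def rearr {X : Type*} [MeasurableSpace X] (m : Measure X) (u : X → ℝ) (K N : ℝ) (x : ℝ) : ℝ :=
  genInv m u ((modelMeasure K N (Set.Icc 0 x)).toReal)

/-- Essentially non-branching `CD(K,N)` condition with `K > 0`, encoded through the
synthetic properties used throughout the paper: geodesic metric space, normalized
reference measure, and the Lévy–Gromov isoperimetric inequality of
Cavalletti–Mondino (valid exactly on essentially non-branching `CD(K,N)` spaces). -/
structure EssNonbranchingCD (X : Type*) [MetricSpace X] [MeasurableSpace X] (m : Measure X)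
    (K N : ℝ) : Prop where
  posK : 0 < K
  oneltN : 1 < N
  prob : m Set.univ = 1
  geodesic : IsGeodesicSpace X
  levyGromov : ∀ E : Set X, MeasurableSet E →
    isoProfile (modelMeasure K N) ((m E).toReal) ≤ (relPer m E Set.univ).toReal

/-- `RCD(K,N)` condition: `CD(K,N)` plus infinitesimal Hilbertianity
(parallelogram identity for the Cheeger 2-energy). -/
structure RCDsp (X : Type*) [MetricSpace X] [MeasurableSpace X] (m : Measure X)
    (K N : ℝ) extends EssNonbranchingCD X m K N : Prop where
  hilbertian : ∀ f g : X → ℝ,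
    cheegerE m 2 (fun x => f x + g x) + cheegerE m 2 (fun x => f x - g x)
      = 2 * cheegerE m 2 f + 2 * cheegerE m 2 g

/-- Membership in `W^{1,p}_0(Ω)`: limit in `W^{1,p}` norm of compactly supported
Lipschitz functions on `Ω`. -/
def memW1p0 {X : Type*} [MetricSpace X] [MeasurableSpace X] (m : Measure X) (p : ℝ)
    (Ω : Set X) (u : X → ℝ) : Prop :=
  ∃ v : ℕ → X → ℝ,
    (∀ n, (∃ L, LipschitzWith L (v n)) ∧ HasCompactSupport (v n) ∧ tsupport (v n) ⊆ Ω) ∧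
    Tendsto (fun n => ∫⁻ x, ENNReal.ofReal |v n x - u x| ^ p ∂m) atTop (𝓝 0) ∧
    Tendsto (fun n => cheegerE m p (fun x => v n x - u x)) atTop (𝓝 0)

end

/-!
Rearrangement is a contraction, `∫_{[0,r]} |u* - v*|^p dm_{K,N} ≤ ∫_Ω |u - v|^p dm`, so continuity
follows by squeezing. Writing `(f - g)₊^p` as the measure of `{(a, b) | a < f, g ≤ b}` under a
fixed measure on `ℝ²` (`layerMeasure p`) and applying Tonelli, the contraction reduces to
`m_{K,N} {x ≤ r | a < u*(x), v*(x) ≤ b} ≤ m {a < u, v ≤ b}`. On the left-hand set,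
`F(x) = m_{K,N} [0, x]` lies between `m {v > b}` and `m {u > a}`, and because `F` is continuous
the set of `x ≤ r` with `F(x) ∈ [c₁, c₂]` has measure at most `c₂ - c₁`; finally
`m {u > a} - m {v > b} ≤ m {a < u, v ≤ b}`.
-/

noncomputable section

namespace Rearrangement

section LayerCake

lemma lintegral_Ioc_ofReal_eq_intervalIntegral {f : ℝ → ℝ} {a b : ℝ} (hab : a ≤ b)
    (hf : IntervalIntegrable f volume a b) (hf0 : ∀ x ∈ Ioc a b, 0 ≤ f x) :
    ∫⁻ x in Ioc a b, ENNReal.ofReal (f x) = ENNReal.ofReal (∫ x in a..b, f x) := by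
  rw [intervalIntegral.integral_of_le hab, ofReal_integral_eq_lintegral_ofReal
    ((intervalIntegrable_iff_integrableOn_Ioc_of_le hab).1 hf)
    (ae_restrict_of_forall_mem measurableSet_Ioc hf0)]

lemma intervalIntegral_mul_rpow {p c : ℝ} (hp : 0 < p) :
    ∫ x in (0 : ℝ)..c, p * x ^ (p - 1) = c ^ p := by
  rw [intervalIntegral.integral_const_mul, integral_rpow (Or.inl (by linarith)),
    sub_add_cancel, Real.zero_rpow hp.ne']
  field_simp
  ring

lemma lintegral_Ioc_mul_rpow_sub_left {p a b : ℝ} (hp : 0 < p) (hab : a ≤ b) :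
    ∫⁻ x in Ioc a b, ENNReal.ofReal (p * (x - a) ^ (p - 1)) = ENNReal.ofReal ((b - a) ^ p) := by
  have hint : IntervalIntegrable (fun x => p * (x - a) ^ (p - 1)) volume a b := by
    have := (intervalIntegral.intervalIntegrable_rpow' (a := a - a) (b := b - a)
      (show -1 < p - 1 by linarith)).comp_sub_right a
    simpa using this.const_mul p
  rw [lintegral_Ioc_ofReal_eq_intervalIntegral hab hint
      fun x hx => mul_nonneg hp.le (Real.rpow_nonneg (by linarith [hx.1]) _),
    intervalIntegral.integral_comp_sub_right (fun x => p * x ^ (p - 1)), sub_self,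
    intervalIntegral_mul_rpow hp]

lemma lintegral_Ioc_mul_rpow_sub_right {p a b : ℝ} (hp : 0 < p) (hab : a ≤ b) :
    ∫⁻ x in Ioc a b, ENNReal.ofReal (p * (b - x) ^ (p - 1)) = ENNReal.ofReal ((b - a) ^ p) := by
  have hint : IntervalIntegrable (fun x => p * (b - x) ^ (p - 1)) volume a b := by
    have := (intervalIntegral.intervalIntegrable_rpow' (a := b - a) (b := b - b)
      (show -1 < p - 1 by linarith)).comp_sub_left b
    simpa using this.const_mul p
  rw [lintegral_Ioc_ofReal_eq_intervalIntegral hab hint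
      fun x hx => mul_nonneg hp.le (Real.rpow_nonneg (by linarith [hx.2]) _),
    intervalIntegral.integral_comp_sub_left (fun x => p * x ^ (p - 1)), sub_self,
    intervalIntegral_mul_rpow hp]

def layerDensity (p : ℝ) (z : ℝ × ℝ) : ℝ≥0∞ :=
  if z.2 < z.1 then ENNReal.ofReal (p * ((p - 1) * (z.1 - z.2) ^ (p - 2))) else 0

lemma measurable_layerDensity (p : ℝ) : Measurable (layerDensity p) :=
  Measurable.ite (measurableSet_lt measurable_snd measurable_fst) (by fun_prop) measurable_const

def layer (f₀ g₀ : ℝ) : Set (ℝ × ℝ) := {z | z.1 < f₀ ∧ g₀ ≤ z.2}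

/-- `layerMeasure p (layer f₀ g₀) = (f₀ - g₀)₊ ^ p`: for `p = 1` this is the length
of `[g₀, f₀)`, for `p > 1` the integral of `p (p - 1) (a - b) ^ (p - 2)` over `g₀ ≤ b < a < f₀`. -/
def layerMeasure (p : ℝ) : Measure (ℝ × ℝ) :=
  if p = 1 then volume.map (fun t => (t, t)) else volume.withDensity (layerDensity p)

instance (p : ℝ) : SFinite (layerMeasure p) := by
  unfold layerMeasure
  split_ifs <;> infer_instance

lemma measurableSet_layer (f₀ g₀ : ℝ) : MeasurableSet (layer f₀ g₀) :=
  (measurableSet_lt measurable_fst measurable_const).inter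
    (measurableSet_le measurable_const measurable_snd)

lemma layerMeasure_one_apply (f₀ g₀ : ℝ) :
    layerMeasure 1 (layer f₀ g₀) = ENNReal.ofReal (f₀ - g₀) := by
  rw [layerMeasure, if_pos rfl, Measure.map_apply (by fun_prop) (measurableSet_layer f₀ g₀)]
  have : (fun t : ℝ => (t, t)) ⁻¹' layer f₀ g₀ = Ico g₀ f₀ := by
    ext t; simp [layer, and_comm]
  rw [this, Real.volume_Ico]

lemma lintegral_indicator_layerDensity_slice {p : ℝ} (hp : 1 < p) (f₀ g₀ b : ℝ) :
    ∫⁻ a, (layer f₀ g₀).indicator (layerDensity p) (a, b)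
      = (Ico g₀ f₀).indicator (fun b => ENNReal.ofReal (p * (f₀ - b) ^ (p - 1))) b := by
  by_cases hb : b ∈ Ico g₀ f₀
  · have : (fun a => (layer f₀ g₀).indicator (layerDensity p) (a, b))
        = (Ioo b f₀).indicator
          fun a => ENNReal.ofReal p * ENNReal.ofReal ((p - 1) * (a - b) ^ (p - 2)) := by
      ext a
      simp only [indicator_apply, layer, mem_ofPred_eq, mem_Ioo, layerDensity, hb.1, and_true]
      split_ifs <;> first | rfl | (exfalso; tauto) | exact ENNReal.ofReal_mul (by linarith)
    rw [this, lintegral_indicator measurableSet_Ioo, Measure.restrict_congr_set Ioo_ae_eq_Ioc,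
      lintegral_const_mul _ (by fun_prop), show p - 2 = p - 1 - 1 by ring,
      lintegral_Ioc_mul_rpow_sub_left (by linarith) hb.2.le, ← ENNReal.ofReal_mul (by linarith),
      indicator_of_mem hb]
  · rw [indicator_of_notMem hb]
    have hzero : ∀ a, (layer f₀ g₀).indicator (layerDensity p) (a, b) = 0 := by
      intro a
      simp only [indicator_apply, layer, mem_ofPred_eq, layerDensity]
      split_ifs with h₁ h₂ <;> first | rfl | exact absurd ⟨h₁.2, h₂.trans h₁.1⟩ hb
    simp only [hzero, lintegral_zero]

lemma layerMeasure_layer {p : ℝ} (hp : 1 ≤ p) (f₀ g₀ : ℝ) :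
    layerMeasure p (layer f₀ g₀) = ENNReal.ofReal (f₀ - g₀) ^ p := by
  rcases hp.eq_or_lt with rfl | hp
  · rw [layerMeasure_one_apply, ENNReal.rpow_one]
  rw [layerMeasure, if_neg hp.ne', withDensity_apply _ (measurableSet_layer f₀ g₀),
    Measure.volume_eq_prod, ← lintegral_indicator (measurableSet_layer f₀ g₀),
    lintegral_prod_symm _
      ((measurable_layerDensity p).indicator (measurableSet_layer f₀ g₀)).aemeasurable]
  simp_rw [lintegral_indicator_layerDensity_slice hp]
  rw [lintegral_indicator measurableSet_Ico]
  rcases le_or_gt f₀ g₀ with h | h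
  · rw [Ico_eq_empty h.not_gt, Measure.restrict_empty, lintegral_zero_measure,
      ENNReal.ofReal_of_nonpos (by linarith), ENNReal.zero_rpow_of_pos (by linarith)]
  · rw [Measure.restrict_congr_set Ico_ae_eq_Ioc,
      lintegral_Ioc_mul_rpow_sub_right (by linarith) h.le,
      ENNReal.ofReal_rpow_of_nonneg (by linarith) (by linarith)]

theorem lintegral_ofReal_sub_rpow_eq_lintegral_layerMeasure {Y : Type*} [MeasurableSpace Y]
    {p : ℝ} (hp : 1 ≤ p) (ρ : Measure Y) [SFinite ρ] {f g : Y → ℝ} (hf : Measurable f)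
    (hg : Measurable g) :
    ∫⁻ x, ENNReal.ofReal (f x - g x) ^ p ∂ρ
      = ∫⁻ z, ρ {x | z.1 < f x ∧ g x ≤ z.2} ∂(layerMeasure p) := by
  set S := {q : Y × (ℝ × ℝ) | q.2.1 < f q.1 ∧ g q.1 ≤ q.2.2}
  have hS : MeasurableSet S :=
    (measurableSet_lt (measurable_fst.comp measurable_snd) (hf.comp measurable_fst)).inter
      (measurableSet_le (hg.comp measurable_fst) (measurable_snd.comp measurable_snd))
  calc ∫⁻ x, ENNReal.ofReal (f x - g x) ^ p ∂ρ = ∫⁻ x, layerMeasure p (Prod.mk x ⁻¹' S) ∂ρ := by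
        simp_rw [← layerMeasure_layer hp]; rfl
    _ = ρ.prod (layerMeasure p) S := (Measure.prod_apply hS).symm
    _ = _ := Measure.prod_apply_symm hS

end LayerCake

section GenInv

variable {Y : Type*} [MeasurableSpace Y] {μ : Measure Y} {v w : Y → ℝ}

lemma distribF_of_neg (hv₀ : ∀ y, 0 ≤ v y) {t : ℝ} (ht : t < 0) :
    distribF μ v t = μ.real univ := by
  rw [distribF, show {y | v y > t} = univ from eq_univ_of_forall fun y => ht.trans_le (hv₀ y)]
  rfl

lemma setOf_distribF_lt_subset_Ici (hv₀ : ∀ y, 0 ≤ v y) {s : ℝ} (hs : s ≤ μ.real univ) :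
    {t | distribF μ v t < s} ⊆ Ici 0 := fun t ht => by
  by_contra hneg
  rw [mem_ofPred_eq, distribF_of_neg hv₀ (not_le.1 hneg)] at ht
  linarith

lemma le_distribF_of_lt_genInv (hv₀ : ∀ y, 0 ≤ v y) {a s : ℝ} (hs : 0 < s)
    (hsμ : s ≤ μ.real univ) (h : a < genInv μ v s) : s ≤ distribF μ v a := by
  rw [genInv, if_neg hs.ne'] at h
  by_contra! ha
  exact h.not_ge (csInf_le ⟨0, setOf_distribF_lt_subset_Ici hv₀ hsμ⟩ ha)

variable [IsFiniteMeasure μ]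

lemma distribF_antitone : Antitone (distribF μ v) :=
  fun _ _ h => measureReal_mono fun _ hx => h.trans_lt hx

lemma distribF_le_measureReal_univ (t : ℝ) : distribF μ v t ≤ μ.real univ :=
  measureReal_mono (subset_univ _)

lemma exists_distribF_lt (hv : Measurable v) {s : ℝ} (hs : 0 < s) : ∃ t, distribF μ v t < s := by
  have hlim : Tendsto (fun n : ℕ => μ {y | v y > n}) atTop (𝓝 0) := by
    have := tendsto_measure_iInter_atTop (μ := μ) (s := fun n : ℕ => {y | v y > n})
      (fun n : ℕ => (measurableSet_lt measurable_const hv).nullMeasurableSet)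
      (fun m n hmn y (hy : v y > n) => show v y > m from (Nat.cast_le.2 hmn).trans_lt hy)
      ⟨0, measure_ne_top _ _⟩
    rwa [show ⋂ n : ℕ, {y | v y > n} = ∅ from iInter_eq_empty_iff.2 fun y =>
      (exists_nat_ge (v y)).imp fun n hn => hn.not_gt, measure_empty] at this
  obtain ⟨n, hn⟩ := (((ENNReal.tendsto_toReal ENNReal.zero_ne_top).comp hlim).eventually
    (gt_mem_nhds hs)).exists
  exact ⟨n, hn⟩

lemma distribF_le_of_forall_gt_lt {b s : ℝ}
    (h : ∀ t > b, distribF μ v t < s) : distribF μ v b ≤ s := by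
  have hmono : Monotone fun n : ℕ => {y | v y > b + 1 / (n + 1)} :=
    fun m n hmn y (hy : v y > b + 1 / (m + 1)) => show v y > b + 1 / (n + 1) from
      lt_of_le_of_lt (by linarith [Nat.one_div_le_one_div (α := ℝ) hmn]) hy
  have hU : ⋃ n : ℕ, {y | v y > b + 1 / (n + 1)} = {y | v y > b} := by
    ext y
    simp only [mem_iUnion, mem_ofPred_eq]
    refine ⟨fun ⟨n, hn⟩ => lt_trans (by linarith [Nat.one_div_pos_of_nat (α := ℝ) (n := n)]) hn,
      fun hy => ?_⟩
    obtain ⟨n, hn⟩ := exists_nat_one_div_lt (sub_pos.2 hy)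
    exact ⟨n, by linarith⟩
  have hlim := (ENNReal.tendsto_toReal (measure_ne_top μ _)).comp
    (tendsto_measure_iUnion_atTop (μ := μ) hmono)
  rw [hU] at hlim
  exact le_of_tendsto' hlim fun n =>
    (h _ (by linarith [Nat.one_div_pos_of_nat (α := ℝ) (n := n)])).le

lemma sInf_setOf_distribF_lt_nonneg (hv₀ : ∀ y, 0 ≤ v y) (s : ℝ) :
    0 ≤ sInf {t | distribF μ v t < s} := by
  by_cases hs : s ≤ μ.real univ
  · exact Real.sInf_nonneg fun t ht => setOf_distribF_lt_subset_Ici hv₀ hs ht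
  · rw [show {t | distribF μ v t < s} = univ from eq_univ_of_forall fun t =>
      (distribF_le_measureReal_univ t).trans_lt (not_le.1 hs), Real.sInf_univ]

lemma distribF_le_of_genInv_le (hv : Measurable v) {b s : ℝ} (hs : 0 < s)
    (h : genInv μ v s ≤ b) : distribF μ v b ≤ s := by
  rw [genInv, if_neg hs.ne'] at h
  refine distribF_le_of_forall_gt_lt fun t ht => ?_
  obtain ⟨t', ht', ht't⟩ := exists_lt_of_csInf_lt (exists_distribF_lt hv hs) (h.trans_lt ht)
  exact (distribF_antitone ht't.le).trans_lt ht'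

lemma genInv_antitoneOn (hv : Measurable v) (hv₀ : ∀ y, 0 ≤ v y) :
    AntitoneOn (genInv μ v) (Ioi 0) := by
  intro s hs s' hs' hss'
  rw [genInv, genInv, if_neg (ne_of_gt hs'), if_neg (ne_of_gt hs)]
  by_cases hbdd : BddBelow {t | distribF μ v t < s'}
  · exact csInf_le_csInf hbdd (exists_distribF_lt hv hs) fun t ht => ht.trans_le hss'
  · rw [Real.sInf_of_not_bddBelow hbdd]
    exact sInf_setOf_distribF_lt_nonneg hv₀ s

/-- Away from `0`, `genInv μ v` is the `toReal` of the antitone `EReal`-valued function equal to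
`genInv μ v` on `(0, ∞)` and to `⊤` elsewhere: for `s < 0` both `sInf ∅` and `⊤.toReal` are `0`. -/
lemma measurable_genInv (hv : Measurable v) (hv₀ : ∀ y, 0 ≤ v y) : Measurable (genInv μ v) := by
  set A : ℝ → EReal := fun s => if 0 < s then (genInv μ v s : EReal) else ⊤
  have hA : Antitone A := by
    intro s s' hss'
    by_cases hs : 0 < s
    · simp only [A, if_pos hs, if_pos (hs.trans_le hss'), EReal.coe_le_coe_iff]
      exact genInv_antitoneOn hv hv₀ hs (hs.trans_le hss') hss'
    · simp only [A, if_neg hs]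
      exact le_top
  have hgenInv : genInv μ v = fun s => if s = 0 then essSup v μ else (A s).toReal := by
    funext s
    rcases lt_trichotomy s 0 with hs | rfl | hs
    · have : {t | distribF μ v t < s} = ∅ :=
        eq_empty_of_forall_notMem fun t ht => (measureReal_nonneg.trans_lt (ht.trans hs)).false
      simp [genInv, A, hs.ne, hs.not_gt, this]
    · simp [genInv]
    · simp [A, hs, hs.ne']
  rw [hgenInv]
  exact Measurable.ite (measurableSet_singleton 0) measurable_const hA.measurable.ereal_toReal

lemma distribF_sub_distribF_le (a b : ℝ) :
    distribF μ v a - distribF μ w b ≤ μ.real {y | a < v y ∧ w y ≤ b} := by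
  have hsub : {y | v y > a} ⊆ {y | a < v y ∧ w y ≤ b} ∪ {y | w y > b} :=
    fun y hy => (le_or_gt (w y) b).imp (⟨hy, ·⟩) id
  have := (measureReal_mono (μ := μ) hsub).trans (measureReal_union_le _ _)
  change μ.real {y | v y > a} - μ.real {y | w y > b} ≤ _
  linarith

end GenInv

section Line

variable (ν : Measure ℝ) [IsFiniteMeasure ν] [NullSingletonClass ν]

lemma continuous_measureReal_Icc (a : ℝ) : Continuous fun x => ν.real (Icc a x) := by
  refine continuous_iff_continuousAt.2 fun b => ?_
  have habs : Tendsto (fun x => |x - b|) (𝓝 b) (𝓝 0) := by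
    simpa using (continuous_sub_right b).abs.tendsto b
  have hG : Tendsto (fun x => ν.real (Icc (b - |x - b|) (b + |x - b|))) (𝓝 b) (𝓝 0) :=
    (ENNReal.tendsto_toReal ENNReal.zero_ne_top).comp ((tendsto_measure_Icc ν b).comp habs)
  refine tendsto_iff_dist_tendsto_zero.2 (squeeze_zero (fun _ => dist_nonneg) (fun x => ?_) hG)
  have h₀ := le_abs_self (x - b)
  have h₁ := neg_abs_le (x - b)
  have hx : Icc a x ⊆ Icc a b ∪ Icc (b - |x - b|) (b + |x - b|) := fun t ht =>
    (le_or_gt t b).imp (⟨ht.1, ·⟩) fun h => ⟨by linarith, by linarith [ht.2]⟩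
  have hb : Icc a b ⊆ Icc a x ∪ Icc (b - |x - b|) (b + |x - b|) := fun t ht =>
    (le_or_gt t x).imp (⟨ht.1, ·⟩) fun h => ⟨by linarith, by linarith [ht.2]⟩
  have := (measureReal_mono (μ := ν) hx).trans (measureReal_union_le _ _)
  have := (measureReal_mono (μ := ν) hb).trans (measureReal_union_le _ _)
  rw [Real.dist_eq, abs_sub_le_iff]
  constructor <;> linarith

lemma measure_Icc_inter_preimage_Icc_le (r c₁ c₂ : ℝ) :
    ν (Icc 0 r ∩ (fun x => ν.real (Icc 0 x)) ⁻¹' Icc c₁ c₂) ≤ ENNReal.ofReal (c₂ - c₁) := by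
  set E := Icc 0 r ∩ (fun x => ν.real (Icc 0 x)) ⁻¹' Icc c₁ c₂
  rcases E.eq_empty_or_nonempty with hE | hE
  · simp [hE]
  have hclosed : IsClosed E :=
    isClosed_Icc.inter (isClosed_Icc.preimage (continuous_measureReal_Icc ν 0))
  have hbelow : BddBelow E := ⟨0, fun _ hx => hx.1.1⟩
  have habove : BddAbove E := ⟨r, fun _ hx => hx.1.2⟩
  have hα := hclosed.csInf_mem hE hbelow
  have hβ := hclosed.csSup_mem hE habove
  have hsplit : ν.real (Icc 0 (sSup E))
      = ν.real (Icc 0 (sInf E)) + ν.real (Ioc (sInf E) (sSup E)) := by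
    rw [← measureReal_union (μ := ν) ((Iic_disjoint_Ioi le_rfl).mono Icc_subset_Iic_self
      Ioc_subset_Ioi_self) measurableSet_Ioc,
      Icc_union_Ioc_eq_Icc hα.1.1 (csInf_le_csSup hE hbelow habove)]
  calc ν E ≤ ν (Icc (sInf E) (sSup E)) :=
        measure_mono fun _ hx => ⟨csInf_le hbelow hx, le_csSup habove hx⟩
    _ = ENNReal.ofReal (ν.real (Ioc (sInf E) (sSup E))) := by
        rw [ofReal_measureReal, measure_congr Ioc_ae_eq_Icc]
    _ ≤ ENNReal.ofReal (c₂ - c₁) := ENNReal.ofReal_le_ofReal (by linarith [hα.2.1, hβ.2.2])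

end Line

-- `rearr μ v K N` is `rearrOnto μ (modelMeasure K N) v` by definition.
def rearrOnto {Y : Type*} [MeasurableSpace Y] (μ : Measure Y) (ν : Measure ℝ) (v : Y → ℝ)
    (x : ℝ) : ℝ :=
  genInv μ v (ν.real (Icc 0 x))

section Contraction

variable {Y : Type*} [MeasurableSpace Y] {μ : Measure Y} [IsFiniteMeasure μ]
  {ν : Measure ℝ} [IsFiniteMeasure ν] [NullSingletonClass ν] {v w : Y → ℝ}

lemma measurable_rearrOnto (hv : Measurable v) (hv₀ : ∀ y, 0 ≤ v y) :
    Measurable (rearrOnto μ ν v) :=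
  (measurable_genInv hv hv₀).comp (continuous_measureReal_Icc ν 0).measurable

lemma measure_Icc_inter_setOf_rearrOnto_le {r : ℝ} (hvol : ν (Icc 0 r) = μ univ)
    (hv₀ : ∀ y, 0 ≤ v y) (hw : Measurable w) (a b : ℝ) :
    ν (Icc 0 r ∩ {x | a < rearrOnto μ ν v x ∧ rearrOnto μ ν w x ≤ b})
      ≤ μ {y | a < v y ∧ w y ≤ b} := by
  set F := fun x => ν.real (Icc 0 x)
  have hsub : Icc 0 r ∩ {x | a < rearrOnto μ ν v x ∧ rearrOnto μ ν w x ≤ b}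
      ⊆ (Icc 0 r ∩ F ⁻¹' Icc 0 0)
        ∪ (Icc 0 r ∩ F ⁻¹' Icc (distribF μ w b) (distribF μ v a)) := by
    rintro x ⟨hx, hav, hwb⟩
    -- where `F x = 0`, `genInv` takes its `essSup` branch; these `x` form a null set
    rcases (measureReal_nonneg : 0 ≤ F x).eq_or_lt with h₀ | hpos
    · exact Or.inl ⟨hx, h₀.le, h₀.ge⟩
    have hFr : F x ≤ μ.real univ := by
      rw [Measure.real, ← hvol]
      exact measureReal_mono (Icc_subset_Icc_right hx.2)
    exact Or.inr ⟨hx, distribF_le_of_genInv_le hw hpos hwb,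
      le_distribF_of_lt_genInv hv₀ hpos hFr hav⟩
  calc _ ≤ ν (Icc 0 r ∩ F ⁻¹' Icc 0 0)
        + ν (Icc 0 r ∩ F ⁻¹' Icc (distribF μ w b) (distribF μ v a)) :=
        (measure_mono hsub).trans (measure_union_le _ _)
    _ ≤ ENNReal.ofReal (0 - 0) + ENNReal.ofReal (distribF μ v a - distribF μ w b) :=
        add_le_add (measure_Icc_inter_preimage_Icc_le ν r 0 0)
          (measure_Icc_inter_preimage_Icc_le ν r _ _)
    _ ≤ μ {y | a < v y ∧ w y ≤ b} := by
        rw [sub_self, ENNReal.ofReal_zero, zero_add, ← ofReal_measureReal]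
        exact ENNReal.ofReal_le_ofReal (distribF_sub_distribF_le a b)

lemma lintegral_Icc_ofReal_rearrOnto_sub_rpow_le {p r : ℝ} (hp : 1 ≤ p)
    (hvol : ν (Icc 0 r) = μ univ) (hv : Measurable v) (hw : Measurable w)
    (hv₀ : ∀ y, 0 ≤ v y) (hw₀ : ∀ y, 0 ≤ w y) :
    ∫⁻ x in Icc 0 r, ENNReal.ofReal (rearrOnto μ ν v x - rearrOnto μ ν w x) ^ p ∂ν
      ≤ ∫⁻ y, ENNReal.ofReal (v y - w y) ^ p ∂μ := by
  have hρv := measurable_rearrOnto (μ := μ) (ν := ν) hv hv₀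
  have hρw := measurable_rearrOnto (μ := μ) (ν := ν) hw hw₀
  rw [lintegral_ofReal_sub_rpow_eq_lintegral_layerMeasure hp _ hρv hρw,
    lintegral_ofReal_sub_rpow_eq_lintegral_layerMeasure hp _ hv hw]
  refine lintegral_mono fun z => ?_
  have hS : MeasurableSet {x | z.1 < rearrOnto μ ν v x ∧ rearrOnto μ ν w x ≤ z.2} :=
    (measurableSet_lt measurable_const hρv).inter (measurableSet_le hρw measurable_const)
  rw [Measure.restrict_apply hS, inter_comm]
  exact measure_Icc_inter_setOf_rearrOnto_le hvol hv₀ hw z.1 z.2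

lemma ofReal_abs_sub_rpow {p : ℝ} (hp : 0 < p) (c d : ℝ) :
    ENNReal.ofReal |c - d| ^ p = ENNReal.ofReal (c - d) ^ p + ENNReal.ofReal (d - c) ^ p := by
  rcases le_total d c with h | h
  · rw [abs_of_nonneg (by linarith), ENNReal.ofReal_of_nonpos (by linarith : d - c ≤ 0),
      ENNReal.zero_rpow_of_pos hp, add_zero]
  · rw [abs_of_nonpos (by linarith : c - d ≤ 0),
      ENNReal.ofReal_of_nonpos (by linarith : c - d ≤ 0), ENNReal.zero_rpow_of_pos hp, zero_add,
      neg_sub]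

theorem lintegral_Icc_ofReal_abs_rearrOnto_sub_rpow_le {p r : ℝ} (hp : 1 ≤ p)
    (hvol : ν (Icc 0 r) = μ univ) (hv : Measurable v) (hw : Measurable w)
    (hv₀ : ∀ y, 0 ≤ v y) (hw₀ : ∀ y, 0 ≤ w y) :
    ∫⁻ x in Icc 0 r, ENNReal.ofReal |rearrOnto μ ν v x - rearrOnto μ ν w x| ^ p ∂ν
      ≤ ∫⁻ y, ENNReal.ofReal |v y - w y| ^ p ∂μ := by
  have hρv := measurable_rearrOnto (μ := μ) (ν := ν) hv hv₀
  have hρw := measurable_rearrOnto (μ := μ) (ν := ν) hw hw₀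
  simp_rw [ofReal_abs_sub_rpow (zero_lt_one.trans_le hp)]
  rw [lintegral_add_left (by fun_prop), lintegral_add_left (by fun_prop)]
  exact add_le_add (lintegral_Icc_ofReal_rearrOnto_sub_rpow_le hp hvol hv hw hv₀ hw₀)
    (lintegral_Icc_ofReal_rearrOnto_sub_rpow_le hp hvol hw hv hw₀ hv₀)

end Contraction

-- If the density is not integrable, `modelCoef K N = 0` and the density divided by it is `0`.
instance (K N : ℝ) : IsFiniteMeasure (modelMeasure K N) := by
  refine isFiniteMeasure_withDensity_ofReal ?_
  by_cases h : Integrable (modelDensity K N) (volume.restrict (Ioo 0 (modelLength K N)))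
  · exact (h.div_const _).hasFiniteIntegral
  · simp [modelCoef, integral_undef h]

instance (K N : ℝ) : NullSingletonClass (modelMeasure K N) := by
  unfold modelMeasure
  infer_instance

end Rearrangement

end

theorem rearr_continuous_Lp_general {X : Type*} [MeasurableSpace X]
    (m : Measure X) (K N p : ℝ) (hp : 1 ≤ p)
    (Ω : Set X) (r : ℝ)
    (hvol : modelMeasure K N (Set.Icc 0 r) = m Ω)
    (un : ℕ → X → ℝ) (u : X → ℝ)
    (hmeas : ∀ n, Measurable (un n)) (humeas : Measurable u)
    (hnn : ∀ n x, 0 ≤ un n x) (hunn : ∀ x, 0 ≤ u x)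
    (hconv : Tendsto (fun n => ∫⁻ x in Ω, ENNReal.ofReal |un n x - u x| ^ p ∂m)
      atTop (𝓝 0)) :
    Tendsto (fun n => ∫⁻ x in Set.Icc 0 r,
        ENNReal.ofReal |rearr (m.restrict Ω) (un n) K N x - rearr (m.restrict Ω) u K N x| ^ p
          ∂(modelMeasure K N)) atTop (𝓝 0) := by
  have hvol' : modelMeasure K N (Icc 0 r) = m.restrict Ω univ := by
    rw [Measure.restrict_apply_univ, hvol]
  have : IsFiniteMeasure (m.restrict Ω) := ⟨by rw [← hvol']; exact measure_lt_top _ _⟩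
  exact tendsto_of_tendsto_of_tendsto_of_le_of_le tendsto_const_nhds hconv (fun _ => zero_le)
    fun n => Rearrangement.lintegral_Icc_ofReal_abs_rearrOnto_sub_rpow_le hp hvol' (hmeas n) humeas
      (hnn n) hunn

/-- the monotone rearrangement operator is continuous from `L^p(Ω,m)` to
`L^p([0,r], m_{K,N})`: if `u_n → u` in `L^p` then `u_n* → u*` in `L^p`. -/
theorem rearr_continuous_Lp {X : Type*} [MetricSpace X] [MeasurableSpace X]
    (m : Measure X) [IsFiniteMeasure m] (K N p : ℝ) (hK : 0 < K) (hN : 1 < N) (hp : 1 ≤ p)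
    (Ω : Set X) (hΩ : IsOpen Ω) (r : ℝ) (hr : r ∈ Set.Ioo 0 (modelLength K N))
    (hvol : modelMeasure K N (Set.Icc 0 r) = m Ω)
    (un : ℕ → X → ℝ) (u : X → ℝ)
    (hmeas : ∀ n, Measurable (un n)) (humeas : Measurable u)
    (hnn : ∀ n x, 0 ≤ un n x) (hunn : ∀ x, 0 ≤ u x)
    (hconv : Tendsto (fun n => ∫⁻ x in Ω, ENNReal.ofReal |un n x - u x| ^ p ∂m)
      atTop (𝓝 0)) :
    Tendsto (fun n => ∫⁻ x in Set.Icc 0 r,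
        ENNReal.ofReal |rearr (m.restrict Ω) (un n) K N x - rearr (m.restrict Ω) u K N x| ^ p
          ∂(modelMeasure K N)) atTop (𝓝 0) :=
  rearr_continuous_Lp_general m K N p hp Ω r hvol un u hmeas humeas hnn hunn hconv
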